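/- Let X, Y be random variables on finite sets with joint distribution q, and let f: 𝒳 → ℝ^{|𝒴|} be any function. With Φ strictly convex and differentiable on the simplex, min over constant predictions gives: min_{ν} E_X[d_Φ(q_{𝒴|X}, ν)] ≤ E_X[Φ(q_{𝒴|X})] − Φ(q_𝒴) = Ent_Φ(q_{𝒴|X}), where q_𝒴 = E_X[q_{𝒴|X}] is the marginal of Y and the minimizing constant is ν = ∇Φ(q_𝒴). Consequently, Ent_Φ(1_Y|X) ≤ min_f E_{(X,Y)∼q}[d_Φ(1_Y, f(X))] ≤ Ent_Φ(1_Y|X) + Ent_Φ(q_{𝒴|X}). -/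

import Mathlib

/-!
Factor `q(x, y) = q_X(x) q_{𝒴|X}(y | x)`. Since `d_Φ(μ, ν) - Φ(μ)` is affine in `μ` and `1_Y`
averages to `q_{𝒴|X}`, the risk of `f` splits as `Ent_Φ(1_Y|X) + E_X[d_Φ(q_{𝒴|X}, f(X))]`, and
the Fenchel–Young inequality makes the second term nonnegative. For `ν = ∇Φ(q_𝒴)` the gradient
inequality shows that the supremum defining `Φ*(ν)` is attained at `q_𝒴`, so `d_Φ(μ, ν)` is at
most the Bregman divergence of `μ` from `q_𝒴`; its `q_X`-average is the Jensen gap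
`E_X[Φ(q_{𝒴|X})] - Φ(q_𝒴)`, because `q_𝒴` is the `q_X`-average of `q_{𝒴|X}`.
-/

open RealInnerProductSpace

section Convex

variable {E : Type*} [NormedAddCommGroup E] [InnerProductSpace ℝ E] [CompleteSpace E]
  {S : Set E} {Φ : E → ℝ} {x y g : E}

theorem ConvexOn.add_inner_le_of_hasGradientAt (hΦ : ConvexOn ℝ S Φ)
    (hg : HasGradientAt Φ g x) (hx : x ∈ S) (hy : y ∈ S) :
    Φ x + ⟪g, y - x⟫ ≤ Φ y := by
  have hline : ConvexOn ℝ (Set.Icc (0 : ℝ) 1) (Φ ∘ AffineMap.lineMap x y) :=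
    (hΦ.comp_affineMap _).subset (fun _ ht => hΦ.1.lineMap_mem hx hy ht) (convex_Icc 0 1)
  have hderiv : HasDerivAt (Φ ∘ AffineMap.lineMap x y) ⟪g, y - x⟫ (0 : ℝ) := by
    have hg₀ : HasFDerivAt Φ (InnerProductSpace.toDual ℝ E g) (AffineMap.lineMap x y (0 : ℝ)) := by
      simpa using hg.hasFDerivAt
    simpa using hg₀.comp_hasDerivAt 0 AffineMap.hasDerivAt_lineMap
  have hslope := hline.le_slope_of_hasDerivAt (by simp) (by simp) zero_lt_one hderiv
  simp only [slope_def_field, Function.comp_apply, AffineMap.lineMap_apply_one,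
    AffineMap.lineMap_apply_zero, sub_zero, div_one] at hslope
  linarith

end Convex

section Conjugate

variable {E : Type*} [NormedAddCommGroup E] [InnerProductSpace ℝ E]

noncomputable def conjugateOn (S : Set E) (Φ : E → ℝ) (ν : E) : ℝ :=
  ⨆ p : S, ⟪(p : E), ν⟫ - Φ p

noncomputable def fenchelYoungLoss (S : Set E) (Φ : E → ℝ) (μ ν : E) : ℝ :=
  Φ μ + conjugateOn S Φ ν - ⟪μ, ν⟫

variable {S : Set E} {Φ : E → ℝ} {μ p g : E}

/-- Compactness makes the supremum in `conjugateOn` a genuine one: an unbounded `⨆` is `0`. -/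
theorem inner_sub_le_conjugateOn (hS : IsCompact S) (hΦ : ContinuousOn Φ S) (hμ : μ ∈ S)
    (ν : E) : ⟪μ, ν⟫ - Φ μ ≤ conjugateOn S Φ ν := by
  have hbdd : BddAbove ((fun p => ⟪p, ν⟫ - Φ p) '' S) :=
    (hS.image_of_continuousOn
      ((continuous_id.inner continuous_const).continuousOn.sub hΦ)).bddAbove
  rw [Set.image_eq_range] at hbdd
  exact le_ciSup hbdd ⟨μ, hμ⟩

theorem fenchelYoungLoss_nonneg (hS : IsCompact S) (hΦ : ContinuousOn Φ S) (hμ : μ ∈ S)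
    (ν : E) : 0 ≤ fenchelYoungLoss S Φ μ ν := by
  have := inner_sub_le_conjugateOn hS hΦ hμ ν
  unfold fenchelYoungLoss
  linarith

variable [CompleteSpace E]

theorem conjugateOn_le_of_hasGradientAt (hΦ : ConvexOn ℝ S Φ) (hg : HasGradientAt Φ g p)
    (hp : p ∈ S) : conjugateOn S Φ g ≤ ⟪p, g⟫ - Φ p := by
  have : Nonempty S := ⟨⟨p, hp⟩⟩
  refine ciSup_le fun ⟨q, hq⟩ => ?_
  have := hΦ.add_inner_le_of_hasGradientAt hg hp hq
  rw [inner_sub_right, real_inner_comm p g, real_inner_comm q g] at this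
  linarith

theorem fenchelYoungLoss_le_of_hasGradientAt (hΦ : ConvexOn ℝ S Φ) (hg : HasGradientAt Φ g p)
    (hp : p ∈ S) (μ : E) : fenchelYoungLoss S Φ μ g ≤ Φ μ - Φ p - ⟪μ - p, g⟫ := by
  have := conjugateOn_le_of_hasGradientAt hΦ hg hp
  rw [fenchelYoungLoss, inner_sub_left]
  linarith

theorem sum_mul_fenchelYoungLoss_le_of_hasGradientAt {ι : Type*} {s : Finset ι} {w : ι → ℝ}
    {c : ι → E} (hΦ : ConvexOn ℝ S Φ) (hg : HasGradientAt Φ g p) (hp : p ∈ S)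
    (hw₀ : ∀ i ∈ s, 0 ≤ w i) (hw₁ : ∑ i ∈ s, w i = 1) (hc : ∑ i ∈ s, w i • c i = p) :
    ∑ i ∈ s, w i * fenchelYoungLoss S Φ (c i) g ≤ ∑ i ∈ s, w i * Φ (c i) - Φ p :=
  calc ∑ i ∈ s, w i * fenchelYoungLoss S Φ (c i) g
      ≤ ∑ i ∈ s, w i * (Φ (c i) - Φ p - ⟪c i - p, g⟫) :=
        Finset.sum_le_sum fun i hi =>
          mul_le_mul_of_nonneg_left (fenchelYoungLoss_le_of_hasGradientAt hΦ hg hp _) (hw₀ i hi)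
    _ = ∑ i ∈ s, w i * Φ (c i) - Φ p - ⟪∑ i ∈ s, w i • c i - p, g⟫ := by
        simp [mul_sub, Finset.sum_sub_distrib, ← Finset.sum_mul, hw₁, inner_sub_left, sum_inner,
          inner_smul_left]
    _ = ∑ i ∈ s, w i * Φ (c i) - Φ p := by rw [hc, sub_self, inner_zero_left, sub_zero]

end Conjugate

section Euclidean

variable {ι : Type*} [Fintype ι]

def probSimplex (ι : Type*) [Fintype ι] : Set (EuclideanSpace ℝ ι) :=
  {p | (∀ i, 0 ≤ p i) ∧ ∑ i, p i = 1}

theorem isCompact_probSimplex : IsCompact (probSimplex ι) :=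
  (EuclideanSpace.equiv ι ℝ).toHomeomorph.isCompact_preimage.2 (isCompact_stdSimplex ℝ ι)

theorem sum_mul_fenchelYoungLoss_single [DecidableEq ι] {S : Set (EuclideanSpace ℝ ι)}
    {Φ : EuclideanSpace ℝ ι → ℝ} {w : ι → ℝ} {m : ℝ} {c : EuclideanSpace ℝ ι}
    (hwc : ∀ i, m * c i = w i) (hm : ∑ i, w i = m) (ν : EuclideanSpace ℝ ι) :
    ∑ i, w i * fenchelYoungLoss S Φ (EuclideanSpace.single i 1) ν =
      m * (∑ i, c i * Φ (EuclideanSpace.single i 1) - Φ c) + m * fenchelYoungLoss S Φ c ν := by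
  have hΦ : m * ∑ i, c i * Φ (EuclideanSpace.single i 1) =
      ∑ i, w i * Φ (EuclideanSpace.single i 1) := by
    simp only [Finset.mul_sum, ← hwc, mul_assoc]
  have hinner : m * ⟪c, ν⟫ = ∑ i, w i * ν i := by
    simp only [PiLp.inner_apply, Finset.mul_sum, ← hwc, RCLike.inner_apply, conj_trivial]
    exact Finset.sum_congr rfl fun i _ => by ring
  simp only [fenchelYoungLoss, EuclideanSpace.inner_single_left, map_one, one_mul, mul_add,
    mul_sub, Finset.sum_add_distrib, Finset.sum_sub_distrib, ← Finset.sum_mul, hm]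
  linarith

end Euclidean

section Joint

variable {X ι : Type*} {q : X → ι → ℝ} {qX : X → ℝ} {cond : X → EuclideanSpace ℝ ι}
  {qY : EuclideanSpace ℝ ι}

/-- Where `qX x = 0`, `cond x` is the junk value `0`, but then the whole row `q x` vanishes. -/
theorem marginal_mul_cond [Fintype ι] (hq₀ : ∀ x y, 0 ≤ q x y) (hqX : ∀ x, qX x = ∑ y, q x y)
    (hcond : ∀ x y, cond x y = q x y / qX x) (x : X) (y : ι) : qX x * cond x y = q x y := by
  rcases eq_or_ne (qX x) 0 with h | h
  · rw [h, zero_mul, eq_comm]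
    exact (Finset.sum_eq_zero_iff_of_nonneg fun y _ => hq₀ x y).1 (h ▸ hqX x).symm y
      (Finset.mem_univ y)
  · rw [hcond, mul_div_cancel₀ _ h]

theorem cond_mem_probSimplex [Fintype ι] (hq₀ : ∀ x y, 0 ≤ q x y)
    (hqX : ∀ x, qX x = ∑ y, q x y) (hcond : ∀ x y, cond x y = q x y / qX x) {x : X}
    (hx : qX x ≠ 0) : cond x ∈ probSimplex ι := by
  refine ⟨fun y => ?_, ?_⟩
  · rw [hcond, hqX]
    exact div_nonneg (hq₀ x y) (Finset.sum_nonneg fun y _ => hq₀ x y)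
  · simp only [hcond, ← Finset.sum_div, ← hqX, div_self hx]

theorem marginal_mem_probSimplex [Fintype X] [Fintype ι] (hq₀ : ∀ x y, 0 ≤ q x y)
    (hq₁ : ∑ x, ∑ y, q x y = 1) (hqY : ∀ y, qY y = ∑ x, q x y) : qY ∈ probSimplex ι := by
  refine ⟨fun y => hqY y ▸ Finset.sum_nonneg fun x _ => hq₀ x y, ?_⟩
  simp only [hqY]
  rw [Finset.sum_comm, hq₁]

theorem sum_smul_cond [Fintype X] (hfac : ∀ x y, qX x * cond x y = q x y)
    (hqY : ∀ y, qY y = ∑ x, q x y) : ∑ x, qX x • cond x = qY := by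
  ext y
  simp [hqY, hfac]

end Joint

/-- Bounds on the minimal Fenchel–Young risk: the constant prediction
`∇Φ(q_𝒴)` witnesses `min_ν E_X[d_Φ(q_{𝒴|X}, ν)] ≤ Ent_Φ(q_{𝒴|X})`, and consequently
`Ent_Φ(1_Y|X) ≤ min_f E[d_Φ(1_Y, f(X))] ≤ Ent_Φ(1_Y|X) + Ent_Φ(q_{𝒴|X})`. -/
theorem fenchel_young_risk_bounds {X : Type*} [Fintype X] (d : ℕ)
    (q : X → Fin d → ℝ) (hq0 : ∀ x y, 0 ≤ q x y) (hq1 : ∑ x, ∑ y, q x y = 1)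
    (Φ : EuclideanSpace ℝ (Fin d) → ℝ) (hdiff : Differentiable ℝ Φ)
    (S : Set (EuclideanSpace ℝ (Fin d)))
    (hS : S = {p : EuclideanSpace ℝ (Fin d) | (∀ i, 0 ≤ p i) ∧ ∑ i, p i = 1})
    (hconv : StrictConvexOn ℝ S Φ)
    (Φs : EuclideanSpace ℝ (Fin d) → ℝ)
    (hΦs : ∀ ν, Φs ν = ⨆ p : S, ⟪(p : EuclideanSpace ℝ (Fin d)), ν⟫ - Φ p)
    (dΦ : EuclideanSpace ℝ (Fin d) → EuclideanSpace ℝ (Fin d) → ℝ)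
    (hd : ∀ μ ν, dΦ μ ν = Φ μ + Φs ν - ⟪μ, ν⟫)
    (onehot : Fin d → EuclideanSpace ℝ (Fin d))
    (hone : ∀ y i, onehot y i = if i = y then 1 else 0)
    (qX : X → ℝ) (hqX : ∀ x, qX x = ∑ y, q x y)
    (cond : X → EuclideanSpace ℝ (Fin d)) (hcond : ∀ x y, cond x y = q x y / qX x)
    (qY : EuclideanSpace ℝ (Fin d)) (hqY : ∀ y, qY y = ∑ x, q x y)
    (EntCond Ent1 : ℝ)
    (hEntCond : EntCond = (∑ x, qX x * Φ (cond x)) - Φ qY)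
    (hEnt1 : Ent1 = ∑ x, qX x * ((∑ y, cond x y * Φ (onehot y)) - Φ (cond x)))
    (risk : (X → EuclideanSpace ℝ (Fin d)) → ℝ)
    (hrisk : ∀ f, risk f = ∑ x, ∑ y, q x y * dΦ (onehot y) (f x)) :
    (∑ x, qX x * dΦ (cond x) (gradient Φ qY)) ≤ EntCond ∧
    (∀ f : X → EuclideanSpace ℝ (Fin d), Ent1 ≤ risk f) ∧
    (∃ f : X → EuclideanSpace ℝ (Fin d), risk f ≤ Ent1 + EntCond) := by
  obtain rfl : Φs = conjugateOn S Φ := funext hΦs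
  obtain rfl : dΦ = fenchelYoungLoss S Φ := funext fun μ => funext (hd μ)
  obtain rfl : onehot = fun y => EuclideanSpace.single y 1 :=
    funext fun y => by ext i; simp [hone]
  have hfac := marginal_mul_cond hq0 hqX hcond
  have hqX₀ : ∀ x, 0 ≤ qX x := fun x => hqX x ▸ Finset.sum_nonneg fun y _ => hq0 x y
  have hrisk_eq : ∀ f, risk f = Ent1 + ∑ x, qX x * fenchelYoungLoss S Φ (cond x) (f x) := by
    intro f
    simp only [hrisk, hEnt1, ← Finset.sum_add_distrib]
    exact Finset.sum_congr rfl fun x _ => sum_mul_fenchelYoungLoss_single (hfac x) (hqX x).symm _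
  have hjensen : ∑ x, qX x * fenchelYoungLoss S Φ (cond x) (gradient Φ qY) ≤ EntCond :=
    hEntCond ▸ sum_mul_fenchelYoungLoss_le_of_hasGradientAt hconv.convexOn (hdiff qY).hasGradientAt
      (hS ▸ marginal_mem_probSimplex hq0 hq1 hqY) (fun x _ => hqX₀ x) (by simp only [hqX, hq1])
      (sum_smul_cond hfac hqY)
  refine ⟨hjensen, fun f => ?_, ⟨fun _ => gradient Φ qY, by rw [hrisk_eq]; linarith⟩⟩
  rw [hrisk_eq, le_add_iff_nonneg_right]
  refine Finset.sum_nonneg fun x _ => ?_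
  rcases eq_or_ne (qX x) 0 with hx | hx
  · simp [hx]
  · exact mul_nonneg (hqX₀ x) <| fenchelYoungLoss_nonneg (hS ▸ isCompact_probSimplex)
      hdiff.continuous.continuousOn (hS ▸ cond_mem_probSimplex hq0 hqX hcond hx) _
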